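/- arXiv:1607.01821 — 8 statements merged into one kernel-verified Lean document; each statement's English description precedes it below -/
import Mathlib

section
/- Let L_g be a real symmetric |F| × |F| matrix and let B = I_{|F|} ⊗ B1 + L_g ⊗ B2, where B1 = [[0,1],[0,0]] and B2 = [[0,0],[−1,−1]]. Then a complex number μ is an eigenvalue of B (viewed as a complex matrix) if and only if there exists a (real) eigenvalue λ of L_g such that μ² + λ·μ + λ = 0. -/
open scoped Kronecker Matrix

/-- The network formation dynamics matrix `B = I ⊗ B₁ + L_g ⊗ B₂` with unit control
gains, where `B₁ = [[0,1],[0,0]]` and `B₂ = [[0,0],[−1,−1]]`. -/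
noncomputable def formationMatrix {F : Type*} [Fintype F] [DecidableEq F]
    (Lg : Matrix F F ℝ) : Matrix (F × Fin 2) (F × Fin 2) ℝ :=
  (1 : Matrix F F ℝ) ⊗ₖ !![0, 1; 0, 0] + Lg ⊗ₖ !![0, 0; -1, -1]

/-! Write `L_g = U D Uᵀ` with `U` orthogonal and `D = diag(λᵢ)`. Conjugating by `U ⊗ I` turns `B`
into `I ⊗ B₁ + D ⊗ B₂`, which after reordering the basis is block diagonal with blocks
`B₁ + λᵢ B₂ = [[0, 1], [-λᵢ, -λᵢ]]`. Hence `B` already has, over `ℝ`, the characteristic polynomial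
`∏ᵢ (X² + λᵢ X + λᵢ)`, and the complex eigenvalues of `B` are the complex roots of its factors. -/

open Polynomial

namespace Matrix

theorem one_kronecker_add_diagonal_kronecker {R F n : Type*} [Semiring R] [DecidableEq F]
    (P Q : Matrix n n R) (d : F → R) :
    1 ⊗ₖ P + diagonal d ⊗ₖ Q =
      reindex (Equiv.prodComm _ _) (Equiv.prodComm _ _) (blockDiagonal fun i => P + d i • Q) := by
  rw [← diagonal_one, diagonal_kronecker, diagonal_kronecker,
    show (fun i => P + d i • Q) = (fun _ => P) + fun i => d i • Q from rfl, blockDiagonal_add]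
  simp only [one_smul]
  rfl

variable {R F n : Type*} [CommRing R] [Fintype F] [DecidableEq F] [Fintype n] [DecidableEq n]

theorem charmatrix_blockDiagonal (M : F → Matrix n n R) :
    charmatrix (blockDiagonal M) = blockDiagonal fun i => charmatrix (M i) := by
  ext ⟨k, i⟩ ⟨k', j⟩
  by_cases hij : i = j <;> by_cases hkk : k = k' <;>
    simp [blockDiagonal_apply, hij, hkk]

theorem charpoly_blockDiagonal (M : F → Matrix n n R) :
    (blockDiagonal M).charpoly = ∏ i, (M i).charpoly := by
  rw [charpoly, charmatrix_blockDiagonal, det_blockDiagonal]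
  rfl

theorem charpoly_mul_mul_of_mul_eq_one {U V : Matrix n n R} (h : V * U = 1) (M : Matrix n n R) :
    (U * M * V).charpoly = M.charpoly := by
  rw [charpoly_mul_comm, ← Matrix.mul_assoc, h, Matrix.one_mul]

theorem charpoly_one_kronecker_add_kronecker_conj {U V : Matrix F F R} (h : V * U = 1)
    (A : Matrix F F R) (P Q : Matrix n n R) :
    (1 ⊗ₖ P + (U * A * V) ⊗ₖ Q).charpoly = (1 ⊗ₖ P + A ⊗ₖ Q).charpoly := by
  have hconj : (U ⊗ₖ 1) * (1 ⊗ₖ P + A ⊗ₖ Q) * (V ⊗ₖ 1) = 1 ⊗ₖ P + (U * A * V) ⊗ₖ Q := by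
    simp only [Matrix.mul_add, Matrix.add_mul, ← mul_kronecker_mul, Matrix.mul_one,
      Matrix.one_mul, mul_eq_one_comm.mp h]
  rw [← hconj, charpoly_mul_mul_of_mul_eq_one]
  rw [← mul_kronecker_mul, h, Matrix.one_mul, one_kronecker_one]

theorem IsHermitian.charpoly_one_kronecker_add_kronecker {𝕜 : Type*} [RCLike 𝕜] {A : Matrix F F 𝕜}
    (hA : A.IsHermitian) (P Q : Matrix n n 𝕜) :
    (1 ⊗ₖ P + A ⊗ₖ Q).charpoly = ∏ i, (P + (hA.eigenvalues i : 𝕜) • Q).charpoly := by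
  conv_lhs => rw [hA.spectral_theorem, Unitary.conjStarAlgAut_apply,
    charpoly_one_kronecker_add_kronecker_conj (Unitary.coe_star_mul_self _),
    one_kronecker_add_diagonal_kronecker, charpoly_reindex, charpoly_blockDiagonal]
  rfl

end Matrix

open Matrix

theorem formationBlock_charpoly {R : Type*} [CommRing R] [Nontrivial R] (l : R) :
    (!![0, 1; 0, 0] + l • !![0, 0; -1, -1] : Matrix (Fin 2) (Fin 2) R).charpoly =
      X ^ 2 + C l * X + C l := by
  rw [charpoly_fin_two, trace_fin_two, det_fin_two]
  simp

theorem formationMatrix_charpoly {F : Type*} [Fintype F] [DecidableEq F] {Lg : Matrix F F ℝ}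
    (hLg : Lg.IsHermitian) :
    (formationMatrix Lg).charpoly =
      ∏ i, (X ^ 2 + C (hLg.eigenvalues i) * X + C (hLg.eigenvalues i)) := by
  simp only [formationMatrix, hLg.charpoly_one_kronecker_add_kronecker, RCLike.ofReal_real_eq_id,
    id, formationBlock_charpoly]

/-- For a real symmetric matrix `L_g`, a complex number `μ` is an eigenvalue of
`B = I ⊗ B₁ + L_g ⊗ B₂` (viewed as a complex matrix) iff there is a real eigenvalue `λ` of
`L_g` with `μ² + λ·μ + λ = 0`. -/
theorem formationMatrix_eigenvalues {F : Type*} [Fintype F] [DecidableEq F]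
    (Lg : Matrix F F ℝ) (hsym : Lg.IsHermitian) (μ : ℂ) :
    μ ∈ spectrum ℂ ((formationMatrix Lg).map (Complex.ofReal)) ↔
      ∃ l : ℝ, l ∈ spectrum ℝ Lg ∧ μ ^ 2 + (l : ℂ) * μ + (l : ℂ) = 0 := by
  rw [mem_spectrum_iff_isRoot_charpoly, show Complex.ofReal = ⇑Complex.ofRealHom from rfl,
    charpoly_map, formationMatrix_charpoly hsym, hsym.spectrum_real_eq_range_eigenvalues]
  simp [Polynomial.map_prod, eval_prod, Finset.prod_eq_zero_iff]
end

section
/- Let L_g be a real symmetric positive definite |F| × |F| matrix and let B = I_{|F|} ⊗ B1 + L_g ⊗ B2, where B1 = [[0,1],[0,0]] and B2 = [[0,0],[−1,−1]]. Then every complex eigenvalue μ of B has strictly negative real part. -/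
open scoped Kronecker Matrix

/-!
An eigenvector `v` of `B` for `μ` has velocity block `v (i, 1) = μ • v (i, 0)`, so its position
block `x` satisfies `(1 + μ) L_g x = -μ² x`. Pairing with `x` gives `n μ² + s μ + s = 0` where
`n = x* x > 0` and `s = x* L_g x > 0` (the complexification of a real positive definite matrix is
positive definite). A quadratic with positive real coefficients has both roots in the open left
half plane.
-/

open scoped ComplexOrder

open Matrix

theorem Complex.re_neg_of_mul_sq_add_mul_add_eq_zero {a b c z : ℂ} (ha : 0 < a) (hb : 0 < b)
    (hc : 0 < c) (h : a * z ^ 2 + b * z + c = 0) : z.re < 0 := by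
  rw [Complex.pos_iff] at ha hb hc
  have hre := congrArg Complex.re h
  have him := congrArg Complex.im h
  simp only [Complex.add_re, Complex.add_im, Complex.mul_re, Complex.mul_im, sq, ← ha.2, ← hb.2,
    ← hc.2, Complex.zero_re, Complex.zero_im] at hre him
  by_contra! hz
  rcases eq_or_ne z.im 0 with him0 | him0
  · rw [him0] at hre
    nlinarith [mul_nonneg ha.1.le (mul_nonneg hz hz), mul_nonneg hb.1.le hz]
  · have hvertex : 2 * a.re * z.re + b.re = 0 := by
      apply mul_left_cancel₀ him0
      linear_combination him
    nlinarith

namespace Matrix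

variable {n : Type*} [Fintype n]

theorem re_star_dotProduct_map_ofReal_mulVec (M : Matrix n n ℝ) (x : n → ℂ) :
    (star x ⬝ᵥ M.map (↑) *ᵥ x).re =
      (fun i ↦ (x i).re) ⬝ᵥ M *ᵥ (fun i ↦ (x i).re) +
        (fun i ↦ (x i).im) ⬝ᵥ M *ᵥ (fun i ↦ (x i).im) := by
  simp only [dotProduct, mulVec, Complex.re_sum, Complex.mul_re, Complex.im_ofReal_mul, map_apply,
    Complex.ofReal_re, Complex.ofReal_im, Pi.star_apply, Complex.star_def, Complex.conj_re,
    Complex.conj_im, Finset.mul_sum, ← Finset.sum_add_distrib]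
  refine Finset.sum_congr rfl fun i _ ↦ Finset.sum_congr rfl fun j _ ↦ ?_
  ring

theorem im_star_dotProduct_map_ofReal_mulVec (M : Matrix n n ℝ) (x : n → ℂ) :
    (star x ⬝ᵥ M.map (↑) *ᵥ x).im =
      (fun i ↦ (x i).re) ⬝ᵥ M *ᵥ (fun i ↦ (x i).im) -
        (fun i ↦ (x i).im) ⬝ᵥ M *ᵥ (fun i ↦ (x i).re) := by
  simp only [dotProduct, mulVec, Complex.mul_im, Complex.im_sum, Complex.re_ofReal_mul, map_apply,
    Complex.ofReal_re, Complex.ofReal_im, Pi.star_apply, Complex.star_def, Complex.conj_re,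
    Complex.conj_im, Finset.mul_sum, ← Finset.sum_sub_distrib]
  refine Finset.sum_congr rfl fun i _ ↦ Finset.sum_congr rfl fun j _ ↦ ?_
  ring

theorem PosDef.map_ofReal {M : Matrix n n ℝ} (hM : M.PosDef) :
    (M.map ((↑) : ℝ → ℂ)).PosDef := by
  refine .of_dotProduct_mulVec_pos (hM.isHermitian.map _ fun r ↦ by simp)
    fun x hx ↦ Complex.pos_iff.2 ⟨?_, ?_⟩
  · have hreim : (fun i ↦ (x i).re) ≠ 0 ∨ (fun i ↦ (x i).im) ≠ 0 := by
      contrapose! hx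
      exact funext fun i ↦ Complex.ext (congrFun hx.1 i) (congrFun hx.2 i)
    rw [re_star_dotProduct_map_ofReal_mulVec]
    rcases hreim with hre | him
    · exact add_pos_of_pos_of_nonneg (hM.dotProduct_mulVec_pos hre)
        (hM.posSemidef.dotProduct_mulVec_nonneg _)
    · exact add_pos_of_nonneg_of_pos (hM.posSemidef.dotProduct_mulVec_nonneg _)
        (hM.dotProduct_mulVec_pos him)
  · have hsymm : Mᵀ = M := by
      rw [← conjTranspose_eq_transpose_of_trivial]
      exact hM.isHermitian
    rw [im_star_dotProduct_map_ofReal_mulVec, dotProduct_mulVec, dotProduct_comm,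
      ← mulVec_transpose, hsymm, sub_self]

theorem exists_mulVec_eq_smul_of_mem_spectrum {K : Type*} [Field K] [DecidableEq n]
    {A : Matrix n n K} {μ : K} (hμ : μ ∈ spectrum K A) : ∃ v ≠ 0, A *ᵥ v = μ • v := by
  rw [← spectrum_toLin', ← Module.End.hasEigenvalue_iff_mem_spectrum] at hμ
  obtain ⟨v, hv⟩ := hμ.exists_hasEigenvector
  exact ⟨v, hv.2, by simpa using hv.apply_eq_smul⟩

end Matrix

section FormationMatrix

variable {F R : Type*} [Fintype F] [DecidableEq F] [CommRing R] {Lg : Matrix F F ℝ}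
  {f : ℝ →+* R} {v : F × Fin 2 → R}

theorem formationMatrix_map_mulVec_apply_zero (i : F) :
    ((formationMatrix Lg).map f *ᵥ v) (i, 0) = v (i, 1) := by
  simp [formationMatrix, mulVec, dotProduct, Fintype.sum_prod_type, one_apply]

theorem formationMatrix_map_mulVec_apply_one (i : F) :
    ((formationMatrix Lg).map f *ᵥ v) (i, 1) = -(Lg.map f *ᵥ fun j ↦ v (j, 0) + v (j, 1)) i := by
  simp [formationMatrix, mulVec, dotProduct, Fintype.sum_prod_type, one_apply, mul_add,
    ← Finset.sum_neg_distrib, add_comm]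

theorem exists_smul_mulVec_eq_of_formationMatrix_mulVec_eq_smul {μ : R} (hv : v ≠ 0)
    (h : (formationMatrix Lg).map f *ᵥ v = μ • v) :
    ∃ x ≠ 0, (1 + μ) • (Lg.map f *ᵥ x) = -(μ ^ 2) • x := by
  have hvel (i : F) : v (i, 1) = μ * v (i, 0) := by
    simpa [formationMatrix_map_mulVec_apply_zero] using congrFun h (i, 0)
  refine ⟨fun i ↦ v (i, 0), fun hx ↦ hv (funext fun ⟨i, k⟩ ↦ ?_), funext fun i ↦ ?_⟩
  · fin_cases k
    · exact congrFun hx i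
    · simp [hvel, congrFun hx i]
  · have hsum : (fun j ↦ v (j, 0) + v (j, 1)) = (1 + μ) • fun j ↦ v (j, 0) :=
      funext fun j ↦ by simp [hvel]; ring
    have hacc := congrFun h (i, 1)
    rw [formationMatrix_map_mulVec_apply_one, hsum, mulVec_smul] at hacc
    simp only [Pi.smul_apply, smul_eq_mul, hvel] at hacc ⊢
    linear_combination -hacc

end FormationMatrix

/-- If `L_g` is real symmetric positive definite, then every complex eigenvalue
of `B = I ⊗ B₁ + L_g ⊗ B₂` has strictly negative real part. -/
theorem formationMatrix_eigenvalues_re_neg {F : Type*} [Fintype F] [DecidableEq F]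
    (Lg : Matrix F F ℝ) (hPD : Lg.PosDef) :
    ∀ μ ∈ spectrum ℂ ((formationMatrix Lg).map (Complex.ofReal)), μ.re < 0 := by
  intro μ hμ
  obtain ⟨v, hv0, hv⟩ := exists_mulVec_eq_smul_of_mem_spectrum hμ
  obtain ⟨x, hx0, hx⟩ :=
    exists_smul_mulVec_eq_of_formationMatrix_mulVec_eq_smul (f := Complex.ofRealHom) hv0 hv
  rw [show ⇑Complex.ofRealHom = Complex.ofReal from rfl] at hx
  have hLx : 0 < star x ⬝ᵥ Lg.map (↑) *ᵥ x := hPD.map_ofReal.dotProduct_mulVec_pos hx0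
  have hquad : (star x ⬝ᵥ x) * μ ^ 2 + (star x ⬝ᵥ Lg.map (↑) *ᵥ x) * μ +
      star x ⬝ᵥ Lg.map (↑) *ᵥ x = 0 := by
    have hpair := congrArg (star x ⬝ᵥ ·) hx
    simp only [dotProduct_smul, smul_eq_mul] at hpair
    linear_combination hpair
  exact Complex.re_neg_of_mul_sq_add_mul_add_eq_zero (dotProduct_star_self_pos_iff.2 hx0) hLx hLx
    hquad
end

section
/- Let G be a connected finite simple undirected graph on vertex set V, let S ⊆ V be a nonempty set of grounded nodes with complement F = V \ S nonempty, and let L_g be the grounded Laplacian. For each i ∈ F let β_i = |N_i ∩ S| be the number of grounded nodes adjacent to i, and let ∂S be the set of edges of G with exactly one endpoint in S. Then the smallest eigenvalue λ_1(L_g) satisfies the chain of inequalities: min_{i∈F} β_i ≤ λ_1(L_g) ≤ |∂S|/|F| ≤ max_{i∈F} β_i ≤ |S|. -/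
/-!
The off-diagonal entries of `L_g` are nonpositive and its `i`-th row sums to `β_i`: the full row of
`L` sums to `0` and the deleted columns contribute `-β_i`. Gershgorin's circle theorem therefore
puts every eigenvalue above some row sum, i.e. above `min β`. For the upper bound, the Rayleigh
quotient of the all-ones vector on `F` is `(∑_{i ∈ F} β_i) / |F|`, and `∑_{i ∈ F} β_i = |∂S|` by
counting each boundary edge at its follower endpoint. The remaining inequalities are
"average ≤ maximum" and `N_i ∩ S ⊆ S`.
-/

open scoped Matrix

/-- The grounded Laplacian: the principal submatrix of the Laplacian of `G`
obtained by deleting the rows and columns indexed by the grounded set `S`. -/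
noncomputable def groundedLaplacian {V : Type*} [Fintype V] [DecidableEq V]
    (G : SimpleGraph V) [DecidableRel G.Adj] (S : Finset V) :
    Matrix {v : V // v ∉ S} {v : V // v ∉ S} ℝ :=
  (G.lapMatrix ℝ).submatrix (fun i => (i : V)) (fun j => (j : V))

/-- The number of edges of `G` with exactly one endpoint in `S` (each such edge is counted
once, via its ordered representative `(i, j)` with `i ∈ S` and `j ∉ S`). -/
def edgeBoundaryCard {V : Type*} [Fintype V] [DecidableEq V]
    (G : SimpleGraph V) [DecidableRel G.Adj] (S : Finset V) : ℕ :=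
  (Finset.univ.filter (fun p : V × V => p.1 ∈ S ∧ p.2 ∉ S ∧ G.Adj p.1 p.2)).card

open Finset

namespace Matrix

variable {n : Type*} [Fintype n] [DecidableEq n]

theorem exists_sum_row_le_of_hasEigenvalue {A : Matrix n n ℝ}
    (hA : ∀ i j, i ≠ j → A i j ≤ 0) {μ : ℝ} (hμ : Module.End.HasEigenvalue (toLin' A) μ) :
    ∃ k, ∑ j, A k j ≤ μ := by
  obtain ⟨k, hk⟩ := eigenvalue_mem_ball hμ
  refine ⟨k, ?_⟩
  have hoff : ∑ j ∈ univ.erase k, ‖A k j‖ = -∑ j ∈ univ.erase k, A k j := by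
    rw [← sum_neg_distrib]
    exact sum_congr rfl fun j hj => Real.norm_of_nonpos (hA k j (ne_of_mem_erase hj).symm)
  rw [Metric.mem_closedBall, Real.dist_eq, hoff, abs_le] at hk
  rw [← add_sum_erase _ _ (mem_univ k)]
  linarith [hk.1]

theorem IsHermitian.hasEigenvalue_eigenvalues {𝕜 : Type*} [RCLike 𝕜] {A : Matrix n n 𝕜}
    (hA : A.IsHermitian) (j : n) :
    Module.End.HasEigenvalue (toLin' A) (hA.eigenvalues j : 𝕜) := by
  refine Module.End.hasEigenvalue_of_hasEigenvector (x := ⇑(hA.eigenvectorBasis j)) ⟨?_, ?_⟩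
  · rw [Module.End.mem_eigenspace_iff, toLin'_apply, hA.mulVec_eigenvectorBasis,
      RCLike.real_smul_eq_coe_smul (K := 𝕜)]
  · exact fun h => (hA.eigenvectorBasis.orthonormal.ne_zero j) (WithLp.ofLp_injective _ h)

theorem IsHermitian.iInf_eigenvalues_mul_dotProduct_self_le [Nonempty n] {A : Matrix n n ℝ}
    (hA : A.IsHermitian) (x : n → ℝ) :
    (⨅ j, hA.eigenvalues j) * (x ⬝ᵥ x) ≤ x ⬝ᵥ (A *ᵥ x) := by
  set b := fun j => (hA.eigenvectorBasis j).ofLp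
  have parseval : ∀ u v : n → ℝ, ∑ j, (u ⬝ᵥ b j) * (b j ⬝ᵥ v) = u ⬝ᵥ v := by
    intro u v
    simpa [b, EuclideanSpace.inner_eq_star_dotProduct, dotProduct_comm] using
      hA.eigenvectorBasis.sum_inner_mul_inner (WithLp.toLp 2 u) (WithLp.toLp 2 v)
  have hb : ∀ j, b j ⬝ᵥ (A *ᵥ x) = hA.eigenvalues j * (b j ⬝ᵥ x) := by
    intro j
    rw [dotProduct_mulVec, ← mulVec_transpose, ← conjTranspose_eq_transpose_of_trivial, hA.eq,
      hA.mulVec_eigenvectorBasis, smul_dotProduct, smul_eq_mul]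
  rw [← parseval, ← parseval, mul_sum]
  refine sum_le_sum fun j _ => ?_
  rw [hb, dotProduct_comm x]
  exact (mul_le_mul_of_nonneg_right (ciInf_le (Finite.bddBelow_range _) j)
    (mul_self_nonneg (b j ⬝ᵥ x))).trans_eq (by ring)

end Matrix

namespace SimpleGraph

variable {V : Type*} [Fintype V] [DecidableEq V] (G : SimpleGraph V) [DecidableRel G.Adj]

theorem lapMatrix_apply_of_ne {R : Type*} [Ring R] {i j : V} (h : i ≠ j) :
    G.lapMatrix R i j = -G.adjMatrix R i j := by
  simp [lapMatrix, degMatrix, h]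

theorem lapMatrix_apply_nonpos_of_ne {i j : V} (h : i ≠ j) : G.lapMatrix ℝ i j ≤ 0 := by
  rw [G.lapMatrix_apply_of_ne h, adjMatrix_apply, neg_nonpos]
  split_ifs <;> norm_num

theorem sum_lapMatrix_apply_of_notMem {R : Type*} [Ring R] {S : Finset V} {i : V} (hi : i ∉ S) :
    ∑ j ∈ S, G.lapMatrix R i j = -#(G.neighborFinset i ∩ S) := by
  rw [sum_congr rfl fun j hj => G.lapMatrix_apply_of_ne (R := R) (ne_of_mem_of_not_mem hj hi).symm]
  simp only [adjMatrix_apply, sum_neg_distrib, sum_boole, neg_inj]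
  congr 2
  ext j
  simp [and_comm]

theorem sum_compl_lapMatrix_apply {R : Type*} [Ring R] {S : Finset V} {i : V} (hi : i ∉ S) :
    ∑ j ∈ Sᶜ, G.lapMatrix R i j = #(G.neighborFinset i ∩ S) := by
  have hrow : ∑ j, G.lapMatrix R i j = 0 := by
    simpa [Matrix.mulVec, dotProduct] using congrFun (G.lapMatrix_mulVec_const_eq_zero (R := R)) i
  rw [← sum_add_sum_compl S, G.sum_lapMatrix_apply_of_notMem hi] at hrow
  exact (neg_add_eq_zero.mp hrow).symm

end SimpleGraph

section GroundedLaplacian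

variable {V : Type*} [Fintype V] [DecidableEq V] (G : SimpleGraph V) [DecidableRel G.Adj]

theorem edgeBoundaryCard_eq_sum (S : Finset V) :
    edgeBoundaryCard G S = ∑ j ∈ Sᶜ, #(G.neighborFinset j ∩ S) := by
  rw [edgeBoundaryCard, card_eq_sum_card_fiberwise (f := Prod.snd) (t := Sᶜ)
    fun p hp => by simp_all]
  refine sum_congr rfl fun j hj => card_nbij' Prod.fst (fun i => (i, j)) ?_ ?_ ?_ ?_
  · rintro ⟨i, k⟩ hp
    obtain ⟨⟨hi, -, hik⟩, rfl⟩ := by simpa using hp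
    simp [hi, hik.symm]
  · intro i hi
    simp_all [G.adj_comm]
  · rintro ⟨i, k⟩ hp
    obtain ⟨-, rfl⟩ := by simpa using hp
    rfl
  · intro i _
    rfl

theorem groundedLaplacian_apply_nonpos_of_ne {S : Finset V} {i j : {v : V // v ∉ S}}
    (h : i ≠ j) : groundedLaplacian G S i j ≤ 0 :=
  G.lapMatrix_apply_nonpos_of_ne (Subtype.coe_ne_coe.mpr h)

theorem sum_groundedLaplacian_apply (S : Finset V) (i : {v : V // v ∉ S}) :
    ∑ j, groundedLaplacian G S i j = #(G.neighborFinset i ∩ S) := by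
  rw [← G.sum_compl_lapMatrix_apply i.2, sum_subtype Sᶜ (fun _ => mem_compl)]
  rfl

theorem sum_groundedLaplacian (S : Finset V) :
    ∑ i, ∑ j, groundedLaplacian G S i j = edgeBoundaryCard G S := by
  simp_rw [sum_groundedLaplacian_apply G, edgeBoundaryCard_eq_sum G, Nat.cast_sum]
  exact sum_subtype Sᶜ (fun _ => mem_compl) (fun i => (#(G.neighborFinset i ∩ S) : ℝ)) |>.symm

end GroundedLaplacian

theorem groundedLaplacian_smallest_eigenvalue_bounds_general {V : Type*} [Fintype V] [DecidableEq V]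
    (G : SimpleGraph V) [DecidableRel G.Adj]
    (S : Finset V) (hF : Sᶜ.Nonempty)
    (hsym : (groundedLaplacian G S).IsHermitian) :
    Sᶜ.inf' hF (fun i => ((G.neighborFinset i ∩ S).card : ℝ)) ≤ (⨅ j, hsym.eigenvalues j) ∧
    (⨅ j, hsym.eigenvalues j) ≤ (edgeBoundaryCard G S : ℝ) / (Sᶜ.card : ℝ) ∧
    (edgeBoundaryCard G S : ℝ) / (Sᶜ.card : ℝ)
      ≤ Sᶜ.sup' hF (fun i => ((G.neighborFinset i ∩ S).card : ℝ)) ∧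
    Sᶜ.sup' hF (fun i => ((G.neighborFinset i ∩ S).card : ℝ)) ≤ (S.card : ℝ) := by
  set β : V → ℝ := fun i => #(G.neighborFinset i ∩ S)
  have : Nonempty {v : V // v ∉ S} := let ⟨v, hv⟩ := hF; ⟨⟨v, mem_compl.mp hv⟩⟩
  have hcard : (0 : ℝ) < #Sᶜ := by exact_mod_cast hF.card_pos
  have hedge : (edgeBoundaryCard G S : ℝ) = ∑ i ∈ Sᶜ, β i := by
    simp [β, edgeBoundaryCard_eq_sum G]
  refine ⟨le_ciInf fun j => ?_, ?_, ?_, ?_⟩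
  · obtain ⟨k, hk⟩ := Matrix.exists_sum_row_le_of_hasEigenvalue
      (fun _ _ => groundedLaplacian_apply_nonpos_of_ne G) (hsym.hasEigenvalue_eigenvalues j)
    rw [sum_groundedLaplacian_apply G] at hk
    exact (inf'_le β (mem_compl.mpr k.2)).trans hk
  · have h := hsym.iInf_eigenvalues_mul_dotProduct_self_le (fun _ => 1)
    simp only [dotProduct, Matrix.mulVec, one_mul, mul_one, sum_const, card_univ,
      nsmul_eq_mul, sum_groundedLaplacian G] at h
    rwa [Fintype.card_subtype_compl, Fintype.card_coe, ← card_compl, ← le_div_iff₀ hcard] at h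
  · rw [div_le_iff₀ hcard, hedge, mul_comm, ← nsmul_eq_mul]
    exact sum_le_card_nsmul _ _ _ fun i hi => le_sup' β hi
  · exact sup'_le _ _ fun _ _ => Nat.cast_le.mpr (card_le_card inter_subset_right)

/-- chain of bounds on the smallest eigenvalue of the grounded Laplacian:
`min_{i∈F} β_i ≤ λ₁(L_g) ≤ |∂S|/|F| ≤ max_{i∈F} β_i ≤ |S|`, where `β_i = |N_i ∩ S|`. -/
theorem groundedLaplacian_smallest_eigenvalue_bounds {V : Type*} [Fintype V] [DecidableEq V]
    (G : SimpleGraph V) [DecidableRel G.Adj] (hconn : G.Connected)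
    (S : Finset V) (hS : S.Nonempty) (hF : Sᶜ.Nonempty)
    (hsym : (groundedLaplacian G S).IsHermitian) :
    Sᶜ.inf' hF (fun i => ((G.neighborFinset i ∩ S).card : ℝ)) ≤ (⨅ j, hsym.eigenvalues j) ∧
    (⨅ j, hsym.eigenvalues j) ≤ (edgeBoundaryCard G S : ℝ) / (Sᶜ.card : ℝ) ∧
    (edgeBoundaryCard G S : ℝ) / (Sᶜ.card : ℝ)
      ≤ Sᶜ.sup' hF (fun i => ((G.neighborFinset i ∩ S).card : ℝ)) ∧
    Sᶜ.sup' hF (fun i => ((G.neighborFinset i ∩ S).card : ℝ)) ≤ (S.card : ℝ) :=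
  groundedLaplacian_smallest_eigenvalue_bounds_general G S hF hsym
end

section
/- Let n ≥ 2 and k ≥ 1 and consider the k-nearest neighbor platoon P(n,k). There exists a set S ⊆ {1,…,n} of reference vehicles with |S| = ⌈n/(2k+1)⌉ such that every follower (every vertex in F = {1,…,n} \ S) is adjacent in P(n,k) to at least one vertex of S; consequently, for this arrangement the smallest eigenvalue of the grounded Laplacian satisfies λ_1(L_g) ≥ 1 (equivalently, the H∞ norm 1/λ_1(L_g) of the velocity tracking error dynamics is at most 1). -/
open scoped Matrix

/-- The `k`-nearest neighbor platoon `P(n,k)`: the graph on `{1,…,n}` (modeled as `Fin n`)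
in which distinct vertices `i, j` are adjacent iff `|i − j| ≤ k`. -/
def platoon (n k : ℕ) : SimpleGraph (Fin n) where
  Adj i j := i ≠ j ∧ ((i : ℤ) - (j : ℤ)).natAbs ≤ k
  symm := ⟨by
    intro i j h
    exact ⟨h.1.symm, by omega⟩⟩
  loopless := ⟨fun i h => h.1 rfl⟩

instance (n k : ℕ) : DecidableRel (platoon n k).Adj :=
  fun i j => inferInstanceAs (Decidable (i ≠ j ∧ ((i : ℤ) - (j : ℤ)).natAbs ≤ k))

/-!
A follower `i` with a grounded neighbour has at most `deg i - 1` follower neighbours, so row `i`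
of the grounded Laplacian has diagonal entry `deg i` and off-diagonal absolute row sum at most
`deg i - 1`; by Gershgorin every eigenvalue is then at least `1`. In `P(n,k)` the vertex in the
middle of each block of `2k+1` consecutive vertices is adjacent to the rest of its block, so the
`⌈n/(2k+1)⌉` block centres dominate the platoon.
-/

open Finset

namespace SimpleGraph

variable {V : Type*} (G : SimpleGraph V)

def IsDominating (S : Finset V) : Prop :=
  ∀ i ∉ S, ∃ j ∈ S, G.Adj i j

variable {G}

theorem IsDominating.mono {S T : Finset V} (hS : G.IsDominating S) (hST : S ⊆ T) :
    G.IsDominating T := fun i hiT =>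
  let ⟨j, hjS, hij⟩ := hS i fun hiS => hiT (hST hiS)
  ⟨j, hST hjS, hij⟩

theorem IsDominating.exists_card_eq [Fintype V] {S : Finset V} {m : ℕ} (hS : G.IsDominating S)
    (hSm : #S ≤ m) (hm : m ≤ Fintype.card V) : ∃ T : Finset V, #T = m ∧ G.IsDominating T := by
  obtain ⟨T, hST, -, hT⟩ := exists_subsuperset_card_eq (subset_univ S) hSm (by simpa using hm)
  exact ⟨T, hT, hS.mono hST⟩

end SimpleGraph

theorem Matrix.le_of_mem_spectrum_of_forall_add_sum_abs_le_diag {ι : Type*} [Fintype ι]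
    [DecidableEq ι] {A : Matrix ι ι ℝ} {c μ : ℝ}
    (hA : ∀ i, c + ∑ j ∈ univ.erase i, |A i j| ≤ A i i) (hμ : μ ∈ spectrum ℝ A) : c ≤ μ := by
  rw [← Matrix.spectrum_toLin', ← Module.End.hasEigenvalue_iff_mem_spectrum] at hμ
  obtain ⟨i, hi⟩ := eigenvalue_mem_ball hμ
  rw [Metric.mem_closedBall, Real.dist_eq] at hi
  simp only [Real.norm_eq_abs] at hi
  linarith [hA i, neg_abs_le (μ - A i i)]

section GroundedLaplacian

variable {V : Type*} [Fintype V] [DecidableEq V] {G : SimpleGraph V} [DecidableRel G.Adj]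
  {S : Finset V}

theorem groundedLaplacian_apply_self (i : {v // v ∉ S}) :
    groundedLaplacian G S i i = G.degree i := by
  simp [groundedLaplacian, SimpleGraph.lapMatrix, SimpleGraph.degMatrix]

theorem abs_groundedLaplacian_apply_of_ne {i j : {v // v ∉ S}} (hij : i ≠ j) :
    |groundedLaplacian G S i j| = if G.Adj i j then 1 else 0 := by
  have hij' : (i : V) ≠ j := Subtype.coe_injective.ne hij
  by_cases h : G.Adj i j <;>
    simp [groundedLaplacian, SimpleGraph.lapMatrix, SimpleGraph.degMatrix, hij', h]

theorem one_add_sum_abs_groundedLaplacian_le (hS : G.IsDominating S) (i : {v // v ∉ S}) :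
    1 + ∑ j ∈ univ.erase i, |groundedLaplacian G S i j| ≤ groundedLaplacian G S i i := by
  obtain ⟨s, hsS, his⟩ := hS i i.2
  have hoff : ∑ j ∈ univ.erase i, |groundedLaplacian G S i j|
      = ∑ v ∈ Sᶜ, if G.Adj i v then (1 : ℝ) else 0 := by
    rw [sum_congr rfl fun j hj => abs_groundedLaplacian_apply_of_ne (ne_of_mem_erase hj).symm,
      sum_erase _ (by simp), sum_subtype Sᶜ (fun _ => mem_compl)]
  have hgrounded : 1 ≤ ∑ v ∈ S, if G.Adj i v then (1 : ℝ) else 0 :=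
    (single_le_sum (fun _ _ => by positivity) hsS).trans' (by simp [his])
  rw [groundedLaplacian_apply_self, hoff, G.degree_eq_sum_if_adj, ← sum_add_sum_compl S]
  linarith

theorem SimpleGraph.IsDominating.one_le_of_mem_spectrum_groundedLaplacian
    (hS : G.IsDominating S) {μ : ℝ} (hμ : μ ∈ spectrum ℝ (groundedLaplacian G S)) : 1 ≤ μ :=
  Matrix.le_of_mem_spectrum_of_forall_add_sum_abs_le_diag
    (one_add_sum_abs_groundedLaplacian_le hS) hμ

end GroundedLaplacian

section Platoon

variable {n : ℕ} (k : ℕ)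

def platoonCenter (hn : 0 < n) (t : ℕ) : Fin n :=
  ⟨min (k + (2 * k + 1) * t) (n - 1), by omega⟩

theorem platoon_adj_platoonCenter_div {hn : 0 < n} (i : Fin n)
    (hi : i ≠ platoonCenter k hn (i / (2 * k + 1))) :
    (platoon n k).Adj i (platoonCenter k hn (i / (2 * k + 1))) := by
  refine ⟨hi, ?_⟩
  have hlow := Nat.mul_div_le i (2 * k + 1)
  have hhigh := Nat.lt_mul_div_succ i (show 0 < 2 * k + 1 by omega)
  rw [mul_add_one] at hhigh
  simp only [platoonCenter]
  generalize (2 * k + 1) * (i / (2 * k + 1)) = a at *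
  omega

theorem platoon_isDominating_image_platoonCenter (hn : 0 < n) {m : ℕ}
    (hm : n ≤ (2 * k + 1) * m) :
    (platoon n k).IsDominating ((range m).image (platoonCenter k hn)) := by
  intro i hi
  have hmem : platoonCenter k hn (i / (2 * k + 1)) ∈ (range m).image (platoonCenter k hn) :=
    mem_image_of_mem _ (mem_range.mpr (Nat.div_lt_of_lt_mul (by omega)))
  exact ⟨_, hmem, platoon_adj_platoonCenter_div k i fun h => hi (h ▸ hmem)⟩

end Platoon

theorem platoon_minimally_dense_arrangement_general (n k : ℕ) (hn : 2 ≤ n) :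
    ∃ S : Finset (Fin n), S.card = ⌈(n : ℚ) / (2 * k + 1)⌉₊ ∧
      (∀ i : Fin n, i ∉ S → ∃ j ∈ S, (platoon n k).Adj i j) ∧
      (∀ μ ∈ spectrum ℝ (groundedLaplacian (platoon n k) S), 1 ≤ μ) := by
  set m := ⌈(n : ℚ) / (2 * k + 1)⌉₊
  have hcover : n ≤ (2 * k + 1) * m := by
    have hceil := Nat.le_ceil ((n : ℚ) / (2 * k + 1))
    rw [div_le_iff₀ (by positivity)] at hceil
    exact_mod_cast (by linarith : (n : ℚ) ≤ (2 * k + 1) * m)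
  have hmn : m ≤ n := Nat.ceil_le.mpr (div_le_self (by positivity) (by linarith))
  obtain ⟨S, hcard, hS⟩ :=
    (platoon_isDominating_image_platoonCenter k (by omega) hcover).exists_card_eq
      (card_image_le.trans (card_range m).le) (by simpa using hmn)
  exact ⟨S, hcard, hS, fun μ hμ => hS.one_le_of_mem_spectrum_groundedLaplacian hμ⟩

/-- in `P(n,k)` there is a set `S` of `⌈n/(2k+1)⌉` reference vehicles such that
every follower is adjacent to a reference vehicle; consequently every eigenvalue of the
grounded Laplacian is at least `1` (i.e. `λ₁(L_g) ≥ 1`, equivalently the `H∞` norm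
`1/λ₁(L_g)` of the velocity tracking dynamics is at most `1`). -/
theorem platoon_minimally_dense_arrangement (n k : ℕ) (hn : 2 ≤ n) (hk : 1 ≤ k) :
    ∃ S : Finset (Fin n), S.card = ⌈(n : ℚ) / (2 * k + 1)⌉₊ ∧
      (∀ i : Fin n, i ∉ S → ∃ j ∈ S, (platoon n k).Adj i j) ∧
      (∀ μ ∈ spectrum ℝ (groundedLaplacian (platoon n k) S), 1 ≤ μ) :=
  platoon_minimally_dense_arrangement_general n k hn
end

section
/- Let n, k ≥ 1 and consider the k-nearest neighbor platoon P(n,k). If S ⊆ {1,…,n} is a nonempty set of reference vehicles with F = {1,…,n} \ S nonempty and |S| < n/(2k+1), then the smallest eigenvalue of the grounded Laplacian satisfies λ_1(L_g) < 1; equivalently, with fewer than ⌈n/(2k+1)⌉ reference vehicles, no arrangement achieves H∞ norm 1/λ_1(L_g) ≤ 1 for the velocity tracking dynamics. -/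
/-!
If every eigenvalue of the symmetric matrix `L_g` were at least `1`, then `L_g - I` would be
positive semidefinite, so `𝟙ᵀ L_g 𝟙 ≥ 𝟙ᵀ 𝟙 = |F|`. But `(L_g 𝟙)_i` counts the grounded
neighbours of the follower `i`, so `𝟙ᵀ L_g 𝟙` is the number of edges between `F` and `S`, which is
at most `2k|S|` since every vertex of `P(n,k)` has degree at most `2k`; and `2k|S| < n - |S| = |F|`
is exactly the hypothesis `|S| < n/(2k+1)`.
-/

open scoped Matrix

open Finset Matrix

theorem Matrix.IsHermitian.exists_mem_spectrum_lt_of_dotProduct_mulVec_lt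
    {ι : Type*} [Fintype ι] [DecidableEq ι] {A : Matrix ι ι ℝ} (hA : A.IsHermitian)
    {c : ℝ} {x : ι → ℝ} (hx : x ⬝ᵥ A *ᵥ x < c * (x ⬝ᵥ x)) :
    ∃ μ ∈ spectrum ℝ A, μ < c := by
  by_contra! hge
  have hpsd : (A - algebraMap ℝ _ c).PosSemidef := by
    refine posSemidef_iff_isHermitian_and_spectrum_nonneg.mpr ⟨?_, fun μ hμ => ?_⟩
    · simpa [Algebra.algebraMap_eq_smul_one] using
        hA.sub (isHermitian_one.smul (IsSelfAdjoint.all c))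
    · rw [← spectrum.sub_singleton_eq] at hμ
      obtain ⟨ν, hν, _, rfl, rfl⟩ := hμ
      exact sub_nonneg.mpr (hge ν hν)
  have hquad := hpsd.dotProduct_mulVec_nonneg x
  simp only [star_trivial, Algebra.algebraMap_eq_smul_one, sub_mulVec, smul_mulVec, one_mulVec,
    dotProduct_sub, dotProduct_smul, smul_eq_mul] at hquad
  linarith

namespace SimpleGraph

variable {V : Type*} [Fintype V] (G : SimpleGraph V) [DecidableRel G.Adj]

theorem sum_card_bipartiteAbove_le_card_mul_maxDegree (S T : Finset V) :
    ∑ i ∈ T, #(S.bipartiteAbove G.Adj i) ≤ #S * G.maxDegree := by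
  rw [sum_card_bipartiteAbove_eq_sum_card_bipartiteBelow, ← smul_eq_mul, ← sum_const]
  refine sum_le_sum fun j _ => (card_le_card fun i hi => ?_).trans (G.degree_le_maxDegree j)
  simp only [mem_bipartiteBelow, mem_neighborFinset] at hi ⊢
  exact hi.2.symm

variable [DecidableEq V] (S : Finset V)

theorem groundedLaplacian_isHermitian : (groundedLaplacian G S).IsHermitian :=
  (G.isSymm_lapMatrix ℝ).submatrix _

theorem groundedLaplacian_mulVec_one (i : {v // v ∉ S}) :
    (groundedLaplacian G S *ᵥ 1) i = #(S.bipartiteAbove G.Adj i) := by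
  have hrow : (groundedLaplacian G S *ᵥ 1) i =
      (G.lapMatrix ℝ *ᵥ fun v => if v ∉ S then 1 else 0) i := by
    simp only [mulVec, dotProduct, groundedLaplacian, submatrix_apply, Pi.one_apply, mul_one,
      mul_ite, mul_zero]
    rw [← sum_filter, ← sum_subtype_eq_sum_filter, subtype_univ]
  have hdeg : G.degree i =
      #{j ∈ G.neighborFinset i | j ∈ S} + #{j ∈ G.neighborFinset i | j ∉ S} :=
    (card_filter_add_card_filter_not _).symm
  have hcut : {j ∈ G.neighborFinset i | j ∈ S} = S.bipartiteAbove G.Adj i := by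
    ext j
    simp [bipartiteAbove, and_comm]
  rw [hrow, lapMatrix_mulVec_apply, if_pos i.2, ← hcut, sum_boole, hdeg]
  simp

theorem one_dotProduct_groundedLaplacian_mulVec_one_le :
    1 ⬝ᵥ (groundedLaplacian G S *ᵥ 1) ≤ #S * G.maxDegree := by
  simp_rw [one_dotProduct, groundedLaplacian_mulVec_one]
  rw [← sum_subtype Sᶜ (fun _ => mem_compl) (fun i => (#(S.bipartiteAbove G.Adj i) : ℝ))]
  exact_mod_cast G.sum_card_bipartiteAbove_le_card_mul_maxDegree S Sᶜ

end SimpleGraph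

theorem platoon_maxDegree_le (n k : ℕ) : (platoon n k).maxDegree ≤ 2 * k := by
  refine SimpleGraph.maxDegree_le_of_forall_degree_le _ _ fun j => ?_
  have hj : (j : ℤ) ∈ Icc ((j : ℤ) - k) (j + k) := by simp
  calc (platoon n k).degree j ≤ #((Icc ((j : ℤ) - k) (j + k)).erase j) := by
        refine card_le_card_of_injOn (fun v => (v : ℤ)) (fun v hv => ?_)
          (fun a _ b _ h => Fin.ext (by simpa using h))
        rw [mem_coe, SimpleGraph.mem_neighborFinset] at hv
        obtain ⟨hne, hdist⟩ := hv
        simp only [coe_erase, coe_Icc, Set.mem_sdiff, Set.mem_Icc, Set.mem_singleton_iff]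
        have := Fin.val_ne_of_ne hne
        omega
    _ = 2 * k := by rw [card_erase_of_mem hj, Int.card_Icc]; omega

theorem platoon_too_few_references_general (n k : ℕ) (S : Finset (Fin n))
    (hcard : (S.card : ℝ) < (n : ℝ) / (2 * k + 1)) :
    ∃ μ ∈ spectrum ℝ (groundedLaplacian (platoon n k) S), μ < 1 := by
  have hcut : 1 ⬝ᵥ (groundedLaplacian (platoon n k) S *ᵥ 1) ≤ 2 * k * #S :=
    ((platoon n k).one_dotProduct_groundedLaplacian_mulVec_one_le S).trans <| by
      rw [mul_comm]
      gcongr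
      exact_mod_cast platoon_maxDegree_le n k
  have hfollowers : (2 * k * #S : ℝ) < #Sᶜ := by
    have hn : (#Sᶜ + #S : ℝ) = n := by
      exact_mod_cast (card_compl_add_card S).trans (Fintype.card_fin n)
    rw [lt_div_iff₀ (by positivity)] at hcard
    linarith
  refine ((platoon n k).groundedLaplacian_isHermitian S)
    |>.exists_mem_spectrum_lt_of_dotProduct_mulVec_lt (x := 1) ?_
  rw [one_dotProduct_one, one_mul, Fintype.card_subtype_compl, Fintype.card_coe, ← card_compl]
  exact hcut.trans_lt hfollowers

/-- if the reference set `S` of `P(n,k)` satisfies `|S| < n/(2k+1)`, then the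
smallest eigenvalue of the grounded Laplacian is less than `1`: there is an eigenvalue
`μ < 1` (equivalently, the `H∞` norm `1/λ₁(L_g)` exceeds `1`). -/
theorem platoon_too_few_references (n k : ℕ) (hn : 1 ≤ n) (hk : 1 ≤ k)
    (S : Finset (Fin n)) (hS : S.Nonempty) (hF : Sᶜ.Nonempty)
    (hcard : (S.card : ℝ) < (n : ℝ) / (2 * k + 1)) :
    ∃ μ ∈ spectrum ℝ (groundedLaplacian (platoon n k) S), μ < 1 :=
  platoon_too_few_references_general n k S hcard
end

section
/- Let L_g be a real symmetric positive definite |F| × |F| matrix whose smallest eigenvalue satisfies λ_1(L_g) ≤ 2, and let B = I_{|F|} ⊗ B1 + L_g ⊗ B2, where B1 = [[0,1],[0,0]] and B2 = [[0,0],[−1,−1]]. Then every complex eigenvalue μ of B satisfies Re μ ≤ −λ_1(L_g)/2; that is, the stability margin of the network formation dynamics is at least λ_1(L_g)/2. -/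
open scoped Kronecker Matrix

section Aux

open Matrix

private lemma spectrum_map_subset_aux {F : Type*} [Fintype F] [DecidableEq F]
    (Lg : Matrix F F ℝ) (hA : Lg.IsHermitian) :
    spectrum ℂ (Lg.map Complex.ofReal) ⊆ Set.range (fun i => (hA.eigenvalues i : ℂ)) := by
  classical
  set U : Matrix F F ℝ := (hA.eigenvectorUnitary : Matrix F F ℝ)
  have hU1 : U * star U = 1 := (Matrix.mem_unitaryGroup_iff).mp hA.eigenvectorUnitary.2
  have hU2 : star U * U = 1 := (Matrix.mem_unitaryGroup_iff').mp hA.eigenvectorUnitary.2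
  set φ : Matrix F F ℝ →+* Matrix F F ℂ := (Complex.ofRealHom).mapMatrix
  have hφ : ∀ M : Matrix F F ℝ, φ M = M.map Complex.ofReal := fun M => rfl
  set u : (Matrix F F ℂ)ˣ :=
    ⟨φ U, φ (star U), by rw [← _root_.map_mul, hU1, _root_.map_one],
      by rw [← _root_.map_mul, hU2, _root_.map_one]⟩
  have hspec : Lg = U * Matrix.diagonal (RCLike.ofReal ∘ hA.eigenvalues) * star U :=
    hA.spectral_theorem
  have hdiag : φ (Matrix.diagonal (RCLike.ofReal ∘ hA.eigenvalues))
      = Matrix.diagonal (fun i => (hA.eigenvalues i : ℂ)) := by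
    rw [hφ, Matrix.diagonal_map (by simp)]
    rfl
  have : Lg.map Complex.ofReal = (u : Matrix F F ℂ) *
      Matrix.diagonal (fun i => (hA.eigenvalues i : ℂ)) * ((u⁻¹ : (Matrix F F ℂ)ˣ) : Matrix F F ℂ) := by
    rw [← hφ, congrArg φ hspec, _root_.map_mul, _root_.map_mul, hdiag]
    rfl
  rw [this, spectrum.units_conjugate, spectrum_diagonal]

private lemma matrix_eigvec_mem_spectrum_aux {n : Type*} [Fintype n] [DecidableEq n]
    {M : Matrix n n ℂ} {μ : ℂ} {v : n → ℂ} (hv : v ≠ 0) (h : M *ᵥ v = μ • v) :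
    μ ∈ spectrum ℂ M := by
  rw [← AlgEquiv.spectrum_eq (Matrix.toLinAlgEquiv' (R := ℂ) (n := n)),
    ← Module.End.hasEigenvalue_iff_mem_spectrum]
  apply Module.End.hasEigenvalue_of_hasEigenvector (x := v)
  refine ⟨Module.End.mem_eigenspace_iff.mpr ?_, hv⟩
  rw [Matrix.toLinAlgEquiv'_apply]; exact h

private lemma exists_eigvec_aux {n : Type*} [Fintype n] [DecidableEq n] {M : Matrix n n ℂ}
    {μ : ℂ} (h : μ ∈ spectrum ℂ M) : ∃ v : n → ℂ, v ≠ 0 ∧ M *ᵥ v = μ • v := by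
  rw [← AlgEquiv.spectrum_eq (Matrix.toLinAlgEquiv' (R := ℂ) (n := n)),
    ← Module.End.hasEigenvalue_iff_mem_spectrum] at h
  obtain ⟨v, hv⟩ := h.exists_hasEigenvector
  refine ⟨v, hv.2, ?_⟩
  have := hv.apply_eq_smul
  rwa [Matrix.toLinAlgEquiv'_apply] at this

end Aux

/-- if `L_g` is real symmetric positive definite with smallest eigenvalue
`λ₁(L_g) ≤ 2`, then every complex eigenvalue `μ` of `B = I ⊗ B₁ + L_g ⊗ B₂` satisfies
`Re μ ≤ −λ₁(L_g)/2`: the stability margin of the network formation dynamics is at least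
`λ₁(L_g)/2`. -/
theorem formationMatrix_stability_margin {F : Type*} [Fintype F] [DecidableEq F]
    [Nonempty F] (Lg : Matrix F F ℝ) (hPD : Lg.PosDef)
    (hsmall : (⨅ i, hPD.1.eigenvalues i) ≤ 2) :
    ∀ μ ∈ spectrum ℂ ((formationMatrix Lg).map (Complex.ofReal)),
      μ.re ≤ -(⨅ i, hPD.1.eigenvalues i) / 2 := by
  classical
  intro μ hμ
  set lam1 : ℝ := ⨅ i, hPD.1.eigenvalues i with hlam1
  obtain ⟨v, hv0, hveq⟩ := exists_eigvec_aux hμ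
  set x : F → ℂ := fun i => v (i, 0) with hxdef
  -- first row equations
  have h0 : ∀ i : F, v (i, 1) = μ * x i := by
    intro i
    have h := congrFun hveq (i, 0)
    simp only [Matrix.mulVec, dotProduct, Fintype.sum_prod_type, formationMatrix,
      Matrix.map_apply, Matrix.add_apply, Matrix.kroneckerMap_apply, Matrix.one_apply,
      Fin.sum_univ_two, Pi.smul_apply, smul_eq_mul] at h
    norm_num [apply_ite, Finset.sum_ite_eq] at h
    exact h
  -- second row equations
  have h1 : ∀ i : F, -(∑ j, (Lg i j : ℂ) * (v (j, 0) + v (j, 1))) = μ * v (i, 1) := by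
    intro i
    have h := congrFun hveq (i, 1)
    simp only [Matrix.mulVec, dotProduct, Fintype.sum_prod_type, formationMatrix,
      Matrix.map_apply, Matrix.add_apply, Matrix.kroneckerMap_apply, Matrix.one_apply,
      Fin.sum_univ_two, Pi.smul_apply, smul_eq_mul] at h
    norm_num [apply_ite, Finset.sum_ite_eq, mul_add, Finset.sum_add_distrib] at h ⊢
    rw [← h]; ring
  have hLx : ∀ i : F, (1 + μ) * (∑ j, (Lg i j : ℂ) * x j) = -(μ ^ 2) * x i := by
    intro i
    have h := h1 i
    simp only [h0] at h
    have hsum : ∑ j, (Lg i j : ℂ) * (x j + μ * x j)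
        = (1 + μ) * ∑ j, (Lg i j : ℂ) * x j := by
      rw [Finset.mul_sum]
      exact Finset.sum_congr rfl fun j _ => by ring
    have h' : -(∑ j, (Lg i j : ℂ) * (x j + μ * x j)) = μ * (μ * x i) := h
    rw [hsum] at h'
    linear_combination -h'
  -- x is nonzero
  have hx0 : x ≠ 0 := by
    intro hx
    apply hv0
    funext p
    obtain ⟨i, a⟩ := p
    have hxi : x i = 0 := congrFun hx i
    fin_cases a
    · exact hxi
    · show v (i, 1) = 0
      rw [h0 i, hxi, mul_zero]
  -- 1 + μ ≠ 0
  have hμ1 : (1 + μ) ≠ 0 := by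
    intro h
    apply hx0
    have hμe : μ = -1 := by linear_combination h
    funext i
    have h2 := hLx i
    rw [h, zero_mul, hμe] at h2
    have : -(((-1 : ℂ)) ^ 2) * x i = 0 := h2.symm
    simpa using this
  -- eigenvector equation for Lg
  have hc : (Lg.map Complex.ofReal) *ᵥ x = (-(μ ^ 2) / (1 + μ)) • x := by
    funext i
    have h := hLx i
    have hmv : (Lg.map Complex.ofReal *ᵥ x) i = ∑ j, (Lg i j : ℂ) * x j := by
      simp [Matrix.mulVec, dotProduct, Matrix.map_apply]
    rw [hmv]
    show _ = (-(μ ^ 2) / (1 + μ)) * x i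
    field_simp
    linear_combination h
  have hcs : (-(μ ^ 2) / (1 + μ)) ∈ spectrum ℂ (Lg.map Complex.ofReal) :=
    matrix_eigvec_mem_spectrum_aux hx0 hc
  obtain ⟨k, hk⟩ := spectrum_map_subset_aux Lg hPD.1 hcs
  set lam : ℝ := hPD.1.eigenvalues k with hlamdef
  have hlampos : 0 < lam := hPD.eigenvalues_pos k
  have hlam1le : lam1 ≤ lam := ciInf_le (Finite.bddBelow_range _) k
  have hcomplex : (lam : ℂ) * (1 + μ) = -(μ ^ 2) := by
    have hk' : (lam : ℂ) = -(μ ^ 2) / (1 + μ) := hk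
    rw [hk']
    field_simp
  -- real and imaginary parts
  have hre : lam * (1 + μ.re) = -(μ.re ^ 2 - μ.im ^ 2) := by
    have := congrArg Complex.re hcomplex
    simpa [Complex.mul_re, pow_two] using this
  have him : lam * μ.im = -(2 * μ.re * μ.im) := by
    have := congrArg Complex.im hcomplex
    have h' : lam * μ.im = -(μ.im * μ.re) + -(μ.re * μ.im) := by
      simpa [Complex.mul_im, pow_two] using this
    linarith
  by_cases hb : μ.im = 0
  · -- real eigenvalue case
    rw [hb] at hre
    by_contra hcon
    push_neg at hcon
    have h1a : 0 < 1 + μ.re := by linarith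
    have := mul_pos hlampos h1a
    nlinarith [sq_nonneg μ.re]
  · -- complex pair case: μ.re = -lam/2
    have h2 : (lam + 2 * μ.re) * μ.im = 0 := by linear_combination him
    rcases mul_eq_zero.mp h2 with h3 | h3
    · linarith
    · exact absurd h3 hb
end

section
/- For a real number λ with 0 < λ ≤ 2, the supremum over ω ∈ ℝ of |G(iω)| where G(s) = 1/(s² + λs + λ), i.e., sup_{ω∈ℝ} ((λ − ω²)² + λ²ω²)^{−1/2}, equals 2/(λ^{3/2}·√(4−λ)); and for λ ≥ 2 this supremum equals 1/λ. -/
/-- for `0 < λ ≤ 2`, the peak frequency-response magnitude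
`sup_{ω∈ℝ} ((λ − ω²)² + λ²ω²)^{−1/2}` of `G(s) = 1/(s² + λs + λ)` equals
`2/(λ^{3/2}·√(4−λ))`, and for `λ ≥ 2` it equals `1/λ`. -/
theorem scalar_mode_peak_magnitude (l : ℝ) (hl : 0 < l) :
    (l ≤ 2 →
      (⨆ ω : ℝ, 1 / Real.sqrt ((l - ω ^ 2) ^ 2 + l ^ 2 * ω ^ 2))
        = 2 / (l ^ ((3 : ℝ) / 2) * Real.sqrt (4 - l))) ∧
    (2 ≤ l →
      (⨆ ω : ℝ, 1 / Real.sqrt ((l - ω ^ 2) ^ 2 + l ^ 2 * ω ^ 2)) = 1 / l) := by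
  constructor
  · intro h2
    have h4 : (0:ℝ) < 4 - l := by linarith
    have hm : (0 : ℝ) < l ^ 3 * (4 - l) / 4 := by positivity
    have hgreat : IsGreatest (Set.range fun ω : ℝ =>
        1 / Real.sqrt ((l - ω ^ 2) ^ 2 + l ^ 2 * ω ^ 2))
        (1 / Real.sqrt (l ^ 3 * (4 - l) / 4)) := by
      constructor
      · refine ⟨Real.sqrt (l - l ^ 2 / 2), ?_⟩
        have hc : (0:ℝ) ≤ l - l ^ 2 / 2 := by nlinarith
        have hs : Real.sqrt (l - l ^ 2 / 2) ^ 2 = l - l ^ 2 / 2 := Real.sq_sqrt hc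
        dsimp only
        rw [hs]
        ring_nf
      · rintro x ⟨ω, rfl⟩
        have hfm : l ^ 3 * (4 - l) / 4 ≤ (l - ω ^ 2) ^ 2 + l ^ 2 * ω ^ 2 := by
          nlinarith [sq_nonneg (ω ^ 2 - (l - l ^ 2 / 2))]
        have h1 : Real.sqrt (l ^ 3 * (4 - l) / 4) ≤
            Real.sqrt ((l - ω ^ 2) ^ 2 + l ^ 2 * ω ^ 2) :=
          Real.sqrt_le_sqrt hfm
        exact one_div_le_one_div_of_le (Real.sqrt_pos.mpr hm) h1
    have hsup : (⨆ ω : ℝ, 1 / Real.sqrt ((l - ω ^ 2) ^ 2 + l ^ 2 * ω ^ 2))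
        = 1 / Real.sqrt (l ^ 3 * (4 - l) / 4) := hgreat.csSup_eq
    have hrpow : l ^ ((3 : ℝ) / 2) = Real.sqrt (l ^ 3) := by
      rw [Real.sqrt_eq_rpow, ← Real.rpow_natCast l 3, ← Real.rpow_mul hl.le]
      norm_num
    have hsqrt : Real.sqrt (l ^ 3 * (4 - l) / 4)
        = Real.sqrt (l ^ 3) * Real.sqrt (4 - l) / 2 := by
      rw [show l ^ 3 * (4 - l) / 4
          = (Real.sqrt (l ^ 3) * Real.sqrt (4 - l) / 2) ^ 2 by
        rw [div_pow, mul_pow, Real.sq_sqrt (by positivity), Real.sq_sqrt h4.le]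
        norm_num]
      exact Real.sqrt_sq (by positivity)
    rw [hsup, hsqrt, one_div_div, hrpow]
  · intro h2
    have hgreat : IsGreatest (Set.range fun ω : ℝ =>
        1 / Real.sqrt ((l - ω ^ 2) ^ 2 + l ^ 2 * ω ^ 2)) (1 / l) := by
      constructor
      · refine ⟨0, ?_⟩
        simp [Real.sqrt_sq hl.le]
      · rintro x ⟨ω, rfl⟩
        have hfm : l ^ 2 ≤ (l - ω ^ 2) ^ 2 + l ^ 2 * ω ^ 2 := by
          nlinarith [sq_nonneg (ω ^ 2), mul_nonneg (sq_nonneg ω)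
            (by nlinarith : (0:ℝ) ≤ l ^ 2 - 2 * l)]
        have h1 : l ≤ Real.sqrt ((l - ω ^ 2) ^ 2 + l ^ 2 * ω ^ 2) := by
          have := Real.sqrt_le_sqrt hfm
          rwa [Real.sqrt_sq hl.le] at this
        exact one_div_le_one_div_of_le hl h1
    exact hgreat.csSup_eq
end

section
/- Let L_g be a real symmetric positive definite |F| × |F| matrix whose smallest eigenvalue satisfies λ_1(L_g) ≥ 1 (as holds under the minimally dense arrangement of reference vehicles). For every ω ∈ ℝ the complex matrix (iω)²·I + (1 + iω)·L_g is invertible, and the H∞ norm of the transfer function G(s) = (s²·I + (s+1)·L_g)⁻¹ from disturbances to position errors of the network formation dynamics, namely sup_{ω∈ℝ} ‖((iω)²·I + (1 + iω)·L_g)⁻¹‖ in the operator norm induced by the Euclidean norm, is at most 2/√3. -/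
open scoped Matrix ComplexOrder InnerProductSpace
open Complex

/-!
Write `M(ω) = (iω)² + (1 + iω) L`. For a vector `x`, symmetry of `L` makes `t = ⟪x, L x⟫` real and
`L ≥ 1` gives `t ≥ ‖x‖²`, so `⟪x, M(ω) x⟫ = -ω² ‖x‖² + (1 + iω) t` has modulus at least
`√3/2 · ‖x‖²`: the worst case is `t = ‖x‖²`, `ω² = 1/2`, where the squared modulus
`ω⁴ - ω² + 1` of `1 - ω² + iω` is `3/4`. By Cauchy–Schwarz `‖M(ω) x‖ ≥ √3/2 · ‖x‖`, so `M(ω)` is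
invertible and `‖M(ω)⁻¹‖ ≤ 2/√3` uniformly in `ω`.
-/

lemma sqrt_three_div_two_mul_le_norm_of_le (ω : ℝ) {a b : ℝ} (ha : 0 ≤ a) (hab : a ≤ b) :
    √3 / 2 * a ≤ ‖(I * ω) ^ 2 * a + (1 + I * ω) * b‖ := by
  have hnormSq :
      normSq ((I * ω) ^ 2 * a + (1 + I * ω) * b) = (b - ω ^ 2 * a) ^ 2 + (ω * b) ^ 2 := by
    simp [normSq_apply, pow_two]
    ring
  rw [Complex.norm_def, hnormSq]
  refine Real.le_sqrt_of_sq_le ?_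
  rw [mul_pow, div_pow, Real.sq_sqrt zero_le_three]
  -- `(b - ω²a)² + (ωb)² - 3/4 a² = (a(ω² - 1/2))² + 2a(b - a) + (1 + ω²)(b - a)²`
  nlinarith [sq_nonneg (a * (ω ^ 2 - 1 / 2)), mul_nonneg ha (sub_nonneg.2 hab),
    sq_nonneg (b - a), mul_nonneg (sq_nonneg ω) (sq_nonneg (b - a))]

theorem LinearMap.IsPositive.sqrt_three_div_two_mul_norm_le {E : Type*} [NormedAddCommGroup E]
    [InnerProductSpace ℂ E] {T : E →ₗ[ℂ] E} (hT : (T - 1).IsPositive) (ω : ℝ) (x : E) :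
    √3 / 2 * ‖x‖ ≤ ‖(I * ω) ^ 2 • x + (1 + I * ω) • T x‖ := by
  have hsymm : T.IsSymmetric := by
    simpa [← Module.End.one_eq_id] using hT.isSymmetric.add LinearMap.IsSymmetric.id
  have hreal : ⟪x, T x⟫_ℂ = (re ⟪x, T x⟫_ℂ : ℝ) := by
    rw [← hsymm x x]
    exact (hsymm.coe_re_inner_apply_self x).symm
  have hge : ‖x‖ ^ 2 ≤ re ⟪x, T x⟫_ℂ := by
    have := hT.re_inner_nonneg_right x
    rw [LinearMap.sub_apply, inner_sub_right, map_sub, Module.End.one_apply, inner_self_eq_norm_sq,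
      RCLike.re_to_complex] at this
    linarith
  have hinner : ⟪x, (I * ω) ^ 2 • x + (1 + I * ω) • T x⟫_ℂ
      = (I * ω) ^ 2 * (‖x‖ ^ 2 : ℝ) + (1 + I * ω) * (re ⟪x, T x⟫_ℂ : ℝ) := by
    rw [inner_add_right, inner_smul_right, inner_smul_right, inner_self_eq_norm_sq_to_K, hreal]
    push_cast
    rfl
  have key : √3 / 2 * ‖x‖ * ‖x‖ ≤ ‖x‖ * ‖(I * ω) ^ 2 • x + (1 + I * ω) • T x‖ :=
    calc √3 / 2 * ‖x‖ * ‖x‖ = √3 / 2 * ‖x‖ ^ 2 := by ring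
      _ ≤ ‖⟪x, (I * ω) ^ 2 • x + (1 + I * ω) • T x⟫_ℂ‖ :=
        hinner ▸ sqrt_three_div_two_mul_le_norm_of_le ω (sq_nonneg _) hge
      _ ≤ _ := norm_inner_le_norm _ _
  rcases (norm_nonneg x).eq_or_lt with hx | hx
  · rw [← hx, mul_zero]
    exact norm_nonneg _
  · exact le_of_mul_le_mul_right (by linarith) hx

open scoped MatrixOrder in
theorem Matrix.IsHermitian.posSemidef_map_ofReal_sub_one {n : Type*} [Fintype n] [DecidableEq n]
    {A : Matrix n n ℝ} (hA : A.IsHermitian) (h : ∀ i, 1 ≤ hA.eigenvalues i) :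
    (A.map ofReal - 1).PosSemidef := by
  have hA' : (A.map ofReal).IsHermitian := hA.map _ fun _ => (conj_ofReal _).symm
  -- complexification is an `ℝ`-algebra map, so it can only shrink the real spectrum
  refine (CFC.one_le_iff (R := ℝ) _ hA'.isSelfAdjoint).2 fun r hr => ?_
  obtain ⟨i, rfl⟩ : r ∈ Set.range hA.eigenvalues :=
    hA.spectrum_real_eq_range_eigenvalues ▸
      AlgHom.spectrum_apply_subset ((Algebra.ofId ℝ ℂ).mapMatrix) A hr
  exact h i

namespace Matrix

variable {𝕜 n : Type*} [RCLike 𝕜] [Fintype n] [DecidableEq n] {M : Matrix n n 𝕜} {c : ℝ}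

theorem isUnit_of_mul_norm_le_norm_toEuclideanCLM (hc : 0 < c)
    (h : ∀ x, c * ‖x‖ ≤ ‖toEuclideanCLM (𝕜 := 𝕜) M x‖) : IsUnit M := by
  refine mulVec_injective_iff_isUnit.1 fun u v huv => ?_
  have h0 := h (WithLp.toLp 2 (u - v))
  rw [toEuclideanCLM_toLp, mulVec_sub, huv, sub_self, WithLp.toLp_zero, norm_zero] at h0
  have := (mul_eq_zero.1 (le_antisymm h0 (by positivity))).resolve_left hc.ne'
  simpa [sub_eq_zero] using this

theorem norm_toEuclideanCLM_inv_le (hc : 0 < c)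
    (h : ∀ x, c * ‖x‖ ≤ ‖toEuclideanCLM (𝕜 := 𝕜) M x‖) : ‖toEuclideanCLM (𝕜 := 𝕜) M⁻¹‖ ≤ c⁻¹ := by
  have hM : M * M⁻¹ = 1 :=
    M.mul_nonsing_inv ((isUnit_iff_isUnit_det M).1 (isUnit_of_mul_norm_le_norm_toEuclideanCLM hc h))
  refine ContinuousLinearMap.opNorm_le_bound _ (inv_nonneg.2 hc.le) fun y =>
    (le_inv_mul_iff₀ hc).2 ?_
  have hy : toEuclideanCLM (𝕜 := 𝕜) M (toEuclideanCLM (𝕜 := 𝕜) M⁻¹ y) = y := by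
    rw [← mul_apply_eq_comp, ← map_mul, hM, map_one, one_apply_eq_self]
  simpa only [hy] using h (toEuclideanCLM (𝕜 := 𝕜) M⁻¹ y)

end Matrix

theorem formation_hinf_norm_le_general {F : Type*} [Fintype F] [DecidableEq F]
    (Lg : Matrix F F ℝ) (hPD : Lg.PosDef)
    (hone : 1 ≤ ⨅ i, hPD.1.eigenvalues i) :
    (∀ ω : ℝ, IsUnit ((Complex.I * (ω : ℂ)) ^ 2 • (1 : Matrix F F ℂ)
        + (1 + Complex.I * (ω : ℂ)) • Lg.map Complex.ofReal)) ∧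
    (⨆ ω : ℝ, ‖Matrix.toEuclideanCLM (𝕜 := ℂ)
        (((Complex.I * (ω : ℂ)) ^ 2 • (1 : Matrix F F ℂ)
          + (1 + Complex.I * (ω : ℂ)) • Lg.map Complex.ofReal)⁻¹)‖)
      ≤ 2 / Real.sqrt 3 := by
  have hLg : (Matrix.toEuclideanLin (Lg.map ofReal) - 1).IsPositive := by
    simpa [← Module.End.one_eq_id] using Matrix.isPositive_toEuclideanLin_iff.2
      (hPD.1.posSemidef_map_ofReal_sub_one fun i =>
        hone.trans (ciInf_le (Finite.bddBelow_range _) i))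
  have hbound : ∀ ω : ℝ, ∀ x, √3 / 2 * ‖x‖ ≤ ‖Matrix.toEuclideanCLM (𝕜 := ℂ)
      ((I * ω) ^ 2 • (1 : Matrix F F ℂ) + (1 + I * ω) • Lg.map ofReal) x‖ := fun ω x => by
    simp only [map_add, map_smul, map_one]
    exact hLg.sqrt_three_div_two_mul_norm_le ω x
  have hc : (0 : ℝ) < √3 / 2 := by positivity
  refine ⟨fun ω => Matrix.isUnit_of_mul_norm_le_norm_toEuclideanCLM hc (hbound ω),
    ciSup_le fun ω => ?_⟩
  rw [← inv_div]
  exact Matrix.norm_toEuclideanCLM_inv_le hc (hbound ω)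

/-- if `L_g` is real symmetric positive definite with smallest eigenvalue
`λ₁(L_g) ≥ 1`, then for every `ω ∈ ℝ` the matrix `(iω)²·I + (1+iω)·L_g` is invertible and
the `H∞` norm of `G(s) = (s²·I + (s+1)·L_g)⁻¹` (in the operator norm induced by the
Euclidean norm) is at most `2/√3`. -/
theorem formation_hinf_norm_le {F : Type*} [Fintype F] [DecidableEq F] [Nonempty F]
    (Lg : Matrix F F ℝ) (hPD : Lg.PosDef)
    (hone : 1 ≤ ⨅ i, hPD.1.eigenvalues i) :
    (∀ ω : ℝ, IsUnit ((Complex.I * (ω : ℂ)) ^ 2 • (1 : Matrix F F ℂ)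
        + (1 + Complex.I * (ω : ℂ)) • Lg.map Complex.ofReal)) ∧
    (⨆ ω : ℝ, ‖Matrix.toEuclideanCLM (𝕜 := ℂ)
        (((Complex.I * (ω : ℂ)) ^ 2 • (1 : Matrix F F ℂ)
          + (1 + Complex.I * (ω : ℂ)) • Lg.map Complex.ofReal)⁻¹)‖)
      ≤ 2 / Real.sqrt 3 :=
  formation_hinf_norm_le_general Lg hPD hone
end
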